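/- arXiv:2404.02298 — 7 statements merged into one kernel-verified Lean document; each statement's English description precedes it below -/
import Mathlib

section
/- For every real t, the matrix exponential of tA equals (e^{-ηt}/a) times the 2×2 matrix [[(θ_m/θ)(e^{at}-1)+a e^{at}, (a+θ_m/θ)(1-e^{at})], [(θ_m/θ)(e^{at}-1), (θ_m/θ)(1-e^{at})+a]]. -/
/-!
`A + η • 1 = a • E` where `E` is idempotent (a rank-one projection). The exponential of a multiple
of an idempotent is summed directly from the series, since `E ^ n = E` for `n ≥ 1`:
`exp (s • E) = 1 - E + exp s • E`. As `η • 1` is central, `exp (t • A) = exp (-η t) • exp (a t • E)`.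
-/

open Matrix Real

open NormedSpace Nat in
theorem IsIdempotentElem.exp_smul {𝕂 𝔸 : Type*} [RCLike 𝕂] [Ring 𝔸] [Algebra 𝕂 𝔸]
    [TopologicalSpace 𝔸] [IsTopologicalRing 𝔸] [ContinuousSMul 𝕂 𝔸] [T2Space 𝔸]
    {E : 𝔸} (hE : IsIdempotentElem E) (s : 𝕂) :
    exp (s • E) = 1 - E + exp s • E := by
  have hterm : ∀ n : ℕ, (n !⁻¹ : 𝕂) • (s • E) ^ n =
      (if n = 0 then 1 - E else 0) + ((n !⁻¹ : 𝕂) • s ^ n) • E := by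
    rintro (_ | n)
    · simp
    · rw [smul_pow, hE.pow_succ_eq, smul_smul]
      simp
  have hsum : HasSum (fun n : ℕ => (n !⁻¹ : 𝕂) • (s • E) ^ n) (1 - E + exp s • E) := by
    simp_rw [hterm]
    exact (hasSum_ite_eq 0 (1 - E)).add ((exp_series_hasSum_exp' s).smul_const E)
  rw [congrFun (exp_eq_tsum 𝕂) (s • E), hsum.tsum_eq]

theorem matrix_exp_of_triggering_matrix_general
    (η ε₃ θ θm : ℝ) (hη : 0 < η) (hε₃ : 0 ≤ ε₃)
    (a : ℝ) (ha : a = 1 + ε₃ + η)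
    (A : Matrix (Fin 2) (Fin 2) ℝ)
    (hA : A = !![1 + ε₃ + θm / θ, -(a + θm / θ); θm / θ, -(η + θm / θ)]) :
    ∀ t : ℝ,
      NormedSpace.exp (t • A) =
        (Real.exp (-η * t) / a) •
          !![(θm / θ) * (Real.exp (a * t) - 1) + a * Real.exp (a * t),
              (a + θm / θ) * (1 - Real.exp (a * t));
             (θm / θ) * (Real.exp (a * t) - 1),
              (θm / θ) * (1 - Real.exp (a * t)) + a] := by
  intro t
  have ha0 : a ≠ 0 := by rw [ha]; positivity
  set b := θm / θ
  set E : Matrix (Fin 2) (Fin 2) ℝ := !![(a + b) / a, -(a + b) / a; b / a, -b / a]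
  have hE : IsIdempotentElem E := by
    rw [IsIdempotentElem, Matrix.mul_fin_two]
    ext i j
    fin_cases i <;> fin_cases j <;> simp [E] <;> field_simp <;> ring
  have hsplit : t • A = (-η * t) • 1 + (a * t) • E := by
    ext i j
    fin_cases i <;> fin_cases j <;> simp [hA, E, ha] <;> field_simp <;> ring
  have hcomm : Commute ((-η * t) • (1 : Matrix (Fin 2) (Fin 2) ℝ)) ((a * t) • E) :=
    ((Commute.one_left E).smul_left _).smul_right _
  rw [hsplit, Matrix.exp_add_of_commute _ _ hcomm, IsIdempotentElem.one.exp_smul, hE.exp_smul,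
    ← Real.exp_eq_exp_ℝ]
  ext i j
  fin_cases i <;> fin_cases j <;> simp [E] <;> field_simp <;> ring

/-- For every real `t`, the matrix exponential of `t • A` equals
`(exp (-η*t) / a)` times the explicit 2×2 matrix. -/
theorem matrix_exp_of_triggering_matrix
    (η ε₃ θ θm : ℝ) (hη : 0 < η) (hε₃ : 0 ≤ ε₃) (hθ : 0 < θ) (hθm : 0 < θm)
    (a : ℝ) (ha : a = 1 + ε₃ + η)
    (A : Matrix (Fin 2) (Fin 2) ℝ)
    (hA : A = !![1 + ε₃ + θm / θ, -(a + θm / θ); θm / θ, -(η + θm / θ)]) :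
    ∀ t : ℝ,
      NormedSpace.exp (t • A) =
        (Real.exp (-η * t) / a) •
          !![(θm / θ) * (Real.exp (a * t) - 1) + a * Real.exp (a * t),
              (a + θm / θ) * (1 - Real.exp (a * t));
             (θm / θ) * (Real.exp (a * t) - 1),
              (θm / θ) * (1 - Real.exp (a * t)) + a] :=
  matrix_exp_of_triggering_matrix_general η ε₃ θ θm hη hε₃ a ha A hA
end

section
/- The integral ∫₀¹ 1/(a₀ + a₁ s + a₂ s²) ds equals (1/a)·ln(1 + aθσ/((aθ+θ_m)(1-σ))). -/
/-!
Both the denominator and the target factor through `u(s) = 1 - σ + σ s`: one checks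
`θσ (a₀ + a₁ s + a₂ s²) = u(s) (aθ + θm u(s))`, a product of two linear factors, positive on
`[0, 1]`. Partial fractions give the antiderivative `(log u - log (aθ + θm u)) / a`, and its
increment over `[0, 1]` is the stated logarithm.
-/

open Real intervalIntegral Set

/-- By the partial-fraction identity
`1 / ((α + β s)(γ + δ s)) = (β / (α + β s) - δ / (γ + δ s)) / (βγ - αδ)`,
`(log (α + β s) - log (γ + δ s)) / (βγ - αδ)` is an antiderivative. -/
theorem integral_one_div_mul_linear {α β γ δ x y : ℝ}
    (hu : ∀ s ∈ uIcc x y, α + β * s ≠ 0) (hv : ∀ s ∈ uIcc x y, γ + δ * s ≠ 0)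
    (hdet : β * γ - α * δ ≠ 0) :
    ∫ s in x..y, 1 / ((α + β * s) * (γ + δ * s)) =
      (log (α + β * y) - log (α + β * x) - (log (γ + δ * y) - log (γ + δ * x))) /
        (β * γ - α * δ) := by
  have hderiv : ∀ s ∈ uIcc x y, HasDerivAt
      (fun s => (log (α + β * s) - log (γ + δ * s)) / (β * γ - α * δ))
      (1 / ((α + β * s) * (γ + δ * s))) s := by
    intro s hs
    have hlin : ∀ p q : ℝ, HasDerivAt (fun s => p + q * s) q s := fun p q => by
      simpa using ((hasDerivAt_id s).const_mul q).const_add p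
    refine ((((hlin α β).log (hu s hs)).sub ((hlin γ δ).log (hv s hs))).div_const
      (β * γ - α * δ)).congr_deriv ?_
    rw [div_sub_div _ _ (hu s hs) (hv s hs),
      show β * (γ + δ * s) - (α + β * s) * δ = β * γ - α * δ by ring, div_right_comm,
      div_self hdet]
  have hint : IntervalIntegrable (fun s => 1 / ((α + β * s) * (γ + δ * s)))
      MeasureTheory.volume x y :=
    ContinuousOn.intervalIntegrable <| continuousOn_const.div (by fun_prop)
      fun s hs => mul_ne_zero (hu s hs) (hv s hs)
  rw [integral_eq_sub_of_hasDerivAt hderiv hint]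
  ring

/-- `∫₀¹ 1/(a₀ + a₁ s + a₂ s²) ds
  = (1/a) * log (1 + aθσ / ((aθ + θm) * (1 - σ)))`. -/
theorem dwell_time_integral
    (a θ θm σ : ℝ) (ha : 0 < a) (hθ : 0 < θ) (hθm : 0 < θm)
    (hσ : σ ∈ Set.Ioo (0 : ℝ) 1)
    (a₀ a₁ a₂ : ℝ)
    (ha₀ : a₀ = (a + θm * (1 - σ) / θ) * (1 - σ) / σ)
    (ha₁ : a₁ = a + 2 * θm * (1 - σ) / θ)
    (ha₂ : a₂ = θm * σ / θ) :
    ∫ s in (0 : ℝ)..1, 1 / (a₀ + a₁ * s + a₂ * s ^ 2) =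
      (1 / a) * Real.log (1 + a * θ * σ / ((a * θ + θm) * (1 - σ))) := by
  obtain ⟨hσ0, hσ1⟩ := hσ
  set b := a * θ + θm * (1 - σ)
  have hb : 0 < b := by positivity
  have hfactor : (fun s => 1 / (a₀ + a₁ * s + a₂ * s ^ 2)) =
      fun s => θ * σ * (1 / ((1 - σ + σ * s) * (b + θm * σ * s))) := by
    funext s
    subst ha₀ ha₁ ha₂
    field_simp
    ring
  have hu : ∀ s ∈ uIcc (0 : ℝ) 1, 1 - σ + σ * s ≠ 0 := fun s hs => by
    rw [uIcc_of_le zero_le_one] at hs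
    nlinarith [hs.1]
  have hv : ∀ s ∈ uIcc (0 : ℝ) 1, b + θm * σ * s ≠ 0 := fun s hs => by
    rw [uIcc_of_le zero_le_one] at hs
    nlinarith [mul_nonneg (mul_pos hθm hσ0).le hs.1]
  have hdet : σ * b - (1 - σ) * (θm * σ) = σ * (a * θ) := by ring
  have hlog : log (1 + a * θ * σ / ((a * θ + θm) * (1 - σ))) =
      log b - log (a * θ + θm) - log (1 - σ) := by
    rw [← log_div (by positivity) (by positivity), ← log_div (by positivity) (by linarith)]
    congr 1
    field_simp
    ring
  have hend : b + θm * σ = a * θ + θm := by ring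
  rw [hfactor, integral_const_mul, integral_one_div_mul_linear hu hv (by rw [hdet]; positivity),
    hdet, hlog]
  simp only [mul_zero, add_zero, mul_one, sub_add_cancel, hend, log_one]
  field_simp
  ring
end

section
/- If ψ : ℝ → ℝ is differentiable on [s,t] with ψ(s)=0, ψ(t)=1, 0 ≤ ψ(u) ≤ 1 for all u ∈ [s,t], and ψ'(u) ≤ a₀ + a₁ ψ(u) + a₂ ψ(u)² for all u ∈ [s,t], where a₀, a₁, a₂ > 0, then t - s ≥ ∫₀¹ 1/(a₀ + a₁ r + a₂ r²) dr. -/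
open Set intervalIntegral

/-! If `ψ' ≤ g ∘ ψ` with `g > 0` on the range of `ψ`, then `F := ∫ (1 / g)` satisfies
`(F ∘ ψ)' = ψ' / g(ψ) ≤ 1`, so `F ∘ ψ` grows at most as fast as time: the mean value
inequality gives `∫_{ψ s}^{ψ t} 1 / g ≤ t - s`. -/

section DwellTime

variable {g : ℝ → ℝ} {c d : ℝ}

theorem hasDerivAt_integral_inv_of_pos (hg : Continuous g) (hg_pos : ∀ x ∈ Icc c d, 0 < g x)
    {a x : ℝ} (ha : a ∈ Icc c d) (hx : x ∈ Icc c d) :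
    HasDerivAt (fun y => ∫ r in a..y, (g r)⁻¹) (g x)⁻¹ x := by
  have hinv : ContinuousOn (fun r => (g r)⁻¹) (Icc c d) :=
    hg.continuousOn.inv₀ fun r hr => (hg_pos r hr).ne'
  refine integral_hasDerivAt_right ((hinv.mono (uIcc_subset_Icc ha hx)).intervalIntegrable)
    (hg.measurable.inv.stronglyMeasurable.stronglyMeasurableAtFilter) ?_
  exact hg.continuousAt.inv₀ (hg_pos x hx).ne'

theorem integral_inv_le_sub_of_hasDerivAt_le {ψ ψ' : ℝ → ℝ} {s t : ℝ} (hst : s ≤ t)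
    (hg : Continuous g) (hg_pos : ∀ x ∈ Icc c d, 0 < g x)
    (hψ : ∀ u ∈ Icc s t, HasDerivAt ψ (ψ' u) u) (hmaps : MapsTo ψ (Icc s t) (Icc c d))
    (hle : ∀ u ∈ Icc s t, ψ' u ≤ g (ψ u)) :
    ∫ x in ψ s..ψ t, (g x)⁻¹ ≤ t - s := by
  have hs : s ∈ Icc s t := left_mem_Icc.mpr hst
  set F : ℝ → ℝ := fun y => ∫ r in ψ s..y, (g r)⁻¹
  have hFψ : ∀ u ∈ Icc s t, HasDerivAt (F ∘ ψ) ((g (ψ u))⁻¹ * ψ' u) u := fun u hu =>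
    (hasDerivAt_integral_inv_of_pos hg hg_pos (hmaps hs) (hmaps hu)).comp u (hψ u hu)
  have hFψ_le : ∀ u ∈ Icc s t, (g (ψ u))⁻¹ * ψ' u ≤ 1 := fun u hu => by
    rw [inv_mul_le_iff₀ (hg_pos _ (hmaps hu)), mul_one]
    exact hle u hu
  have hmvt := (convex_Icc s t).image_sub_le_mul_sub_of_deriv_le
    (fun u hu => (hFψ u hu).continuousAt.continuousWithinAt)
    (fun u hu => (hFψ u (interior_subset hu)).differentiableAt.differentiableWithinAt)
    (fun u hu => (hFψ u (interior_subset hu)).deriv ▸ hFψ_le u (interior_subset hu))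
    s hs t (right_mem_Icc.mpr hst) hst
  simpa [F] using hmvt

end DwellTime

/-- if `ψ` is differentiable on `[s,t]` with `ψ s = 0`, `ψ t = 1`,
`0 ≤ ψ ≤ 1` on `[s,t]`, and `ψ' ≤ a₀ + a₁ ψ + a₂ ψ²` on `[s,t]` with
`a₀, a₁, a₂ > 0`, then `t - s ≥ ∫₀¹ 1/(a₀ + a₁ r + a₂ r²) dr`. -/
theorem dwell_time_lower_bound
    (s t : ℝ) (hst : s < t)
    (a₀ a₁ a₂ : ℝ) (ha₀ : 0 < a₀) (ha₁ : 0 < a₁) (ha₂ : 0 < a₂)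
    (ψ ψ' : ℝ → ℝ)
    (hderiv : ∀ u ∈ Set.Icc s t, HasDerivAt ψ (ψ' u) u)
    (hψs : ψ s = 0) (hψt : ψ t = 1)
    (hbound : ∀ u ∈ Set.Icc s t, 0 ≤ ψ u ∧ ψ u ≤ 1)
    (hineq : ∀ u ∈ Set.Icc s t, ψ' u ≤ a₀ + a₁ * ψ u + a₂ * (ψ u) ^ 2) :
    t - s ≥ ∫ r in (0 : ℝ)..1, 1 / (a₀ + a₁ * r + a₂ * r ^ 2) := by
  have hpos : ∀ r ∈ Icc (0 : ℝ) 1, 0 < a₀ + a₁ * r + a₂ * r ^ 2 := fun r hr => by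
    have hr₀ : 0 ≤ r := hr.1
    positivity
  have key := integral_inv_le_sub_of_hasDerivAt_le hst.le (by fun_prop) hpos hderiv
    hbound hineq
  rw [hψs, hψt] at key
  simpa only [one_div] using key
end

section
/- If ψ : ℝ → ℝ is differentiable on [s,t] with ψ(s)=0, ψ(t)=1, 0 ≤ ψ(u) ≤ 1 for all u ∈ [s,t], and ψ'(u) ≤ a₀ + a₁ ψ(u) + a₂ ψ(u)² for all u ∈ [s,t], then t - s ≥ τ where τ := (1/a)·ln(1 + aθσ/((aθ+θ_m)(1-σ))); moreover τ > 0. -/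
open Set Real

/-- with `a₀, a₁, a₂` defined from the trigger parameters, if `ψ`
is differentiable on `[s,t]` with `ψ s = 0`, `ψ t = 1`, `0 ≤ ψ ≤ 1` and
`ψ' ≤ a₀ + a₁ ψ + a₂ ψ²` on `[s,t]`, then `t - s ≥ τ` where
`τ = (1/a) * log (1 + aθσ/((aθ+θm)(1-σ)))`; moreover `τ > 0`. -/
theorem minimum_dwell_time
    (a θ θm σ : ℝ) (ha : 0 < a) (hθ : 0 < θ) (hθm : 0 < θm)
    (hσ : σ ∈ Set.Ioo (0 : ℝ) 1)
    (a₀ a₁ a₂ : ℝ)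
    (ha₀ : a₀ = (a + θm * (1 - σ) / θ) * (1 - σ) / σ)
    (ha₁ : a₁ = a + 2 * θm * (1 - σ) / θ)
    (ha₂ : a₂ = θm * σ / θ)
    (τ : ℝ) (hτ : τ = (1 / a) * Real.log (1 + a * θ * σ / ((a * θ + θm) * (1 - σ))))
    (s t : ℝ) (hst : s < t)
    (ψ ψ' : ℝ → ℝ)
    (hderiv : ∀ u ∈ Set.Icc s t, HasDerivAt ψ (ψ' u) u)
    (hψs : ψ s = 0) (hψt : ψ t = 1)
    (hbound : ∀ u ∈ Set.Icc s t, 0 ≤ ψ u ∧ ψ u ≤ 1)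
    (hineq : ∀ u ∈ Set.Icc s t, ψ' u ≤ a₀ + a₁ * ψ u + a₂ * (ψ u) ^ 2) :
    t - s ≥ τ ∧ 0 < τ := by
  obtain ⟨hσ0, hσ1⟩ := hσ
  have h1σ : 0 < 1 - σ := by linarith
  set b : ℝ := θm / θ with hb_def
  have hb : 0 < b := div_pos hθm hθ
  set y : ℝ → ℝ := fun u => 1 - σ + σ * ψ u with hy_def
  have hy_pos : ∀ u ∈ Set.Icc s t, 0 < y u := by
    intro u hu
    have h1 := (hbound u hu).1
    have h2 : 0 ≤ σ * ψ u := by positivity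
    simp only [hy_def]
    linarith
  have hay_pos : ∀ u ∈ Set.Icc s t, 0 < a + b * y u := by
    intro u hu
    have h1 := hy_pos u hu
    have h2 : 0 < b * y u := by positivity
    linarith
  set g : ℝ → ℝ := fun u => (1/a) * (Real.log (y u) - Real.log (a + b * y u)) with hg_def
  set F : ℝ → ℝ := fun u => u - g u with hF_def
  have hF : ∀ u ∈ Set.Icc s t,
      HasDerivAt F (1 - (σ * ψ' u) / (y u * (a + b * y u))) u := by
    intro u hu
    have hyu := hy_pos u hu
    have hayu := hay_pos u hu
    have hyd : HasDerivAt y (σ * ψ' u) u := ((hderiv u hu).const_mul σ).const_add (1 - σ)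
    have h1 : HasDerivAt (fun v => Real.log (y v)) (σ * ψ' u / y u) u := hyd.log hyu.ne'
    have h2 : HasDerivAt (fun v => Real.log (a + b * y v))
        (b * (σ * ψ' u) / (a + b * y u)) u :=
      ((hyd.const_mul b).const_add a).log hayu.ne'
    have hg : HasDerivAt g
        ((1/a) * (σ * ψ' u / y u - b * (σ * ψ' u) / (a + b * y u))) u :=
      (h1.sub h2).const_mul (1/a)
    have heq : (1/a) * (σ * ψ' u / y u - b * (σ * ψ' u) / (a + b * y u))
        = (σ * ψ' u) / (y u * (a + b * y u)) := by
      field_simp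
      ring
    rw [heq] at hg
    exact (hasDerivAt_id u).sub hg
  have hkey : ∀ u ∈ Set.Icc s t, σ * ψ' u ≤ y u * (a + b * y u) := by
    intro u hu
    have h := hineq u hu
    have hid : σ * (a₀ + a₁ * ψ u + a₂ * (ψ u) ^ 2) = y u * (a + b * y u) := by
      simp only [hy_def, hb_def, ha₀, ha₁, ha₂]
      field_simp
      ring
    calc σ * ψ' u ≤ σ * (a₀ + a₁ * ψ u + a₂ * (ψ u) ^ 2) :=
          mul_le_mul_of_nonneg_left h hσ0.le
      _ = y u * (a + b * y u) := hid
  have hF' : ∀ u ∈ Set.Icc s t, 0 ≤ 1 - (σ * ψ' u) / (y u * (a + b * y u)) := by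
    intro u hu
    have hyu := hy_pos u hu
    have hayu := hay_pos u hu
    have hle : (σ * ψ' u) / (y u * (a + b * y u)) ≤ 1 :=
      (div_le_one (by positivity)).mpr (hkey u hu)
    linarith
  have hmono : MonotoneOn F (Set.Icc s t) := by
    apply monotoneOn_of_deriv_nonneg (convex_Icc s t)
    · intro u hu
      exact (hF u hu).continuousAt.continuousWithinAt
    · intro u hu
      rw [interior_Icc] at hu
      exact (hF u (Set.Ioo_subset_Icc_self hu)).differentiableAt.differentiableWithinAt
    · intro u hu
      rw [interior_Icc] at hu
      rw [(hF u (Set.Ioo_subset_Icc_self hu)).deriv]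
      exact hF' u (Set.Ioo_subset_Icc_self hu)
  have hFst : F s ≤ F t :=
    hmono (Set.left_mem_Icc.mpr hst.le) (Set.right_mem_Icc.mpr hst.le) hst.le
  have hyt : y t = 1 := by simp only [hy_def, hψt, mul_one]; ring
  have hys : y s = 1 - σ := by simp only [hy_def, hψs, mul_zero, add_zero]
  have hab : 0 < a + b := by linarith
  have hab1 : 0 < a + b * (1 - σ) := by nlinarith
  have hX : (1:ℝ) + a * θ * σ / ((a * θ + θm) * (1 - σ))
      = (a + b * (1 - σ)) / ((1 - σ) * (a + b)) := by
    have h1 : a * θ + θm ≠ 0 := by positivity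
    have h2 : (1 - σ) ≠ 0 := h1σ.ne'
    have h3 : θ ≠ 0 := hθ.ne'
    simp only [hb_def]
    field_simp
    ring
  have hτ2 : τ = (1/a) * (Real.log (a + b * (1 - σ)) - Real.log (1 - σ) - Real.log (a + b)) := by
    rw [hτ, hX, Real.log_div hab1.ne' (mul_pos h1σ hab).ne',
      Real.log_mul h1σ.ne' hab.ne']
    ring
  have hgval : g t - g s = τ := by
    simp only [hg_def, hyt, hys, Real.log_one, mul_one]
    rw [hτ2]
    ring
  have hτpos : 0 < τ := by
    rw [hτ]
    apply mul_pos (by positivity)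
    apply Real.log_pos
    have hpos : 0 < a * θ * σ / ((a * θ + θm) * (1 - σ)) :=
      div_pos (by positivity) (mul_pos (by positivity) h1σ)
    linarith
  refine ⟨?_, hτpos⟩
  have : s - g s ≤ t - g t := hFst
  linarith [hgval]
end

section
/- Suppose F > 0, m₀ < 0, η > 0, ϱ > 0, θ > 0, θ_m > 0. Then the argument (θ_m F - m₀(ϱ+η))/(F(θ(ϱ+η)+θ_m)) of the logarithm is positive, and G := (1/(ϱ+η))·ln((θ_m F - m₀(ϱ+η))/(F(θ(ϱ+η)+θ_m))) satisfies the equation θ·F·e^{ϱG} + e^{-ηG}·m₀ + (θ_m F/(ϱ+η))·e^{-ηG}·(e^{(ϱ+η)G} - 1) = 0. -/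
open Real

/-- with `F > 0`, `m₀ < 0`, `η > 0`, `ϱ > 0`, `θ > 0`, `θm > 0`,
the argument of the logarithm in the STC waiting-time function is positive and
`G := (1/(ϱ+η)) * log ((θm F - m₀(ϱ+η))/(F(θ(ϱ+η)+θm)))` satisfies
`θ F e^{ϱG} + e^{-ηG} m₀ + (θm F/(ϱ+η)) e^{-ηG} (e^{(ϱ+η)G} - 1) = 0`. -/
theorem stc_waiting_time_equation
    (F m₀ η ϱ θ θm : ℝ)
    (hF : 0 < F) (hm₀ : m₀ < 0) (hη : 0 < η) (hϱ : 0 < ϱ)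
    (hθ : 0 < θ) (hθm : 0 < θm)
    (G : ℝ)
    (hG : G = (1 / (ϱ + η)) *
        Real.log ((θm * F - m₀ * (ϱ + η)) / (F * (θ * (ϱ + η) + θm)))) :
    0 < (θm * F - m₀ * (ϱ + η)) / (F * (θ * (ϱ + η) + θm)) ∧
      θ * F * Real.exp (ϱ * G) + Real.exp (-η * G) * m₀ +
        (θm * F / (ϱ + η)) * Real.exp (-η * G) *
          (Real.exp ((ϱ + η) * G) - 1) = 0 := by
  have hs : 0 < ϱ + η := by linarith
  have hnum : 0 < θm * F - m₀ * (ϱ + η) := by nlinarith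
  have hden : 0 < F * (θ * (ϱ + η) + θm) := by positivity
  have hA : 0 < (θm * F - m₀ * (ϱ + η)) / (F * (θ * (ϱ + η) + θm)) := div_pos hnum hden
  refine ⟨hA, ?_⟩
  have hE : Real.exp ((ϱ + η) * G) =
      (θm * F - m₀ * (ϱ + η)) / (F * (θ * (ϱ + η) + θm)) := by
    rw [hG]
    rw [show (ϱ + η) * ((1 / (ϱ + η)) *
        Real.log ((θm * F - m₀ * (ϱ + η)) / (F * (θ * (ϱ + η) + θm)))) =
        Real.log ((θm * F - m₀ * (ϱ + η)) / (F * (θ * (ϱ + η) + θm))) by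
      field_simp]
    exact Real.exp_log hA
  have hsplit : Real.exp (ϱ * G) = Real.exp ((ϱ + η) * G) * Real.exp (-η * G) := by
    rw [← Real.exp_add]; ring_nf
  have hpos : Real.exp (-η * G) > 0 := Real.exp_pos _
  rw [hsplit, hE]
  field_simp
  ring
end

section
/- For all t ∈ ℝ and all real d, m, the first component of exp(tA) applied to the vector (θd² + m, m) equals (e^{-ηt}/a)·[(e^{at}(θ_m + aθ) - θ_m)·d² + a·m]. -/
/-!
The vectors `(aθ + θm, θm)` and `(1, 1)` are eigenvectors of `A` with eigenvalues
`1 + ε₃ = a - η` and `-η`, and `(θd² + m, m)` is `d²/a` times the first plus `m - θm d²/a`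
times the second. On an eigenvector the matrix exponential acts as the scalar exponential
of the eigenvalue (compare the two exponential series), so `exp (tA)` multiplies the two
components by `e^{(a-η)t}` and `e^{-ηt}`.
-/

open Matrix Real

namespace Matrix

variable {𝕂 n : Type*} [Fintype n] [DecidableEq n]

theorem pow_mulVec_of_mulVec_eq_smul [CommRing 𝕂] {M : Matrix n n 𝕂} {u : n → 𝕂} {μ : 𝕂}
    (h : M *ᵥ u = μ • u) (k : ℕ) : (M ^ k) *ᵥ u = μ ^ k • u := by
  induction k with
  | zero => simp
  | succ k ih => rw [pow_succ', ← mulVec_mulVec, ih, mulVec_smul, h, smul_smul, pow_succ]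

open NormedSpace Norms.Operator in
theorem exp_mulVec_of_mulVec_eq_smul [RCLike 𝕂] {M : Matrix n n 𝕂} {u : n → 𝕂} {μ : 𝕂}
    (h : M *ᵥ u = μ • u) : exp M *ᵥ u = exp μ • u := by
  have hM := (exp_series_hasSum_exp' (𝕂 := 𝕂) M).map (mulVec.addMonoidHomLeft u)
    (continuous_id.matrix_mulVec continuous_const)
  have hμ := (exp_series_hasSum_exp' (𝕂 := 𝕂) μ).smul_const u
  refine hM.unique ?_
  convert hμ using 2 with k
  change ((k.factorial : 𝕂)⁻¹ • M ^ k) *ᵥ u = _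
  rw [smul_mulVec, pow_mulVec_of_mulVec_eq_smul h, smul_smul, smul_eq_mul]

theorem exp_smul_mulVec_of_mulVec_eq_smul [RCLike 𝕂] {M : Matrix n n 𝕂} {u : n → 𝕂} {μ : 𝕂}
    (h : M *ᵥ u = μ • u) (t : 𝕂) : NormedSpace.exp (t • M) *ᵥ u = NormedSpace.exp (t * μ) • u :=
  exp_mulVec_of_mulVec_eq_smul (by rw [smul_mulVec, h, smul_smul])

end Matrix

section PETC

variable {η ε₃ θ θm a : ℝ}

theorem petc_matrix_mulVec_slow_eigenvector (ha : a = 1 + ε₃ + η) (hθ : θ ≠ 0) :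
    !![1 + ε₃ + θm / θ, -(a + θm / θ); θm / θ, -(η + θm / θ)] *ᵥ ![a * θ + θm, θm] =
      (1 + ε₃) • ![a * θ + θm, θm] := by
  ext i
  fin_cases i <;> simp [mulVec, ha] <;> field_simp <;> ring

theorem petc_matrix_mulVec_fast_eigenvector (ha : a = 1 + ε₃ + η) :
    !![1 + ε₃ + θm / θ, -(a + θm / θ); θm / θ, -(η + θm / θ)] *ᵥ ![1, 1] =
      (-η) • ![1, 1] := by
  ext i
  fin_cases i <;> simp [mulVec, ha]
  ring

theorem petc_initial_state_eq (ha : a ≠ 0) (d m : ℝ) :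
    ![θ * d ^ 2 + m, m] = (d ^ 2 / a) • ![a * θ + θm, θm] + (m - θm * d ^ 2 / a) • ![1, 1] := by
  ext i
  fin_cases i <;> simp <;> field_simp <;> ring

end PETC

theorem petc_triggering_bound_first_component_general
    (η ε₃ θ θm : ℝ) (hη : 0 < η) (hε₃ : 0 ≤ ε₃) (hθ : 0 < θ)
    (a : ℝ) (ha : a = 1 + ε₃ + η)
    (A : Matrix (Fin 2) (Fin 2) ℝ)
    (hA : A = !![1 + ε₃ + θm / θ, -(a + θm / θ); θm / θ, -(η + θm / θ)]) :
    ∀ (t d m : ℝ),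
      (NormedSpace.exp (t • A)).mulVec ![θ * d ^ 2 + m, m] 0 =
        (Real.exp (-η * t) / a) *
          ((Real.exp (a * t) * (θm + a * θ) - θm) * d ^ 2 + a * m) := by
  intro t d m
  have ha₀ : a ≠ 0 := by linarith
  have hslow : Real.exp (t * (1 + ε₃)) = Real.exp (a * t) * Real.exp (-η * t) := by
    rw [← Real.exp_add, ha]; ring_nf
  rw [hA, petc_initial_state_eq ha₀, mulVec_add, mulVec_smul, mulVec_smul,
    exp_smul_mulVec_of_mulVec_eq_smul (petc_matrix_mulVec_slow_eigenvector ha hθ.ne'),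
    exp_smul_mulVec_of_mulVec_eq_smul (petc_matrix_mulVec_fast_eigenvector ha),
    ← Real.exp_eq_exp_ℝ]
  simp only [hslow, neg_mul, smul_cons, smul_eq_mul, smul_empty, mul_neg, mul_one,
    Pi.add_apply, cons_val_zero]
  field_simp
  ring

/-- for all `t`, `d`, `m`, the first component of
`exp (t • A)` applied to the vector `(θ d² + m, m)` equals
`(e^{-ηt}/a) * ((e^{at}(θm + aθ) - θm) d² + a m)`. -/
theorem petc_triggering_bound_first_component
    (η ε₃ θ θm : ℝ) (hη : 0 < η) (hε₃ : 0 ≤ ε₃) (hθ : 0 < θ) (hθm : 0 < θm)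
    (a : ℝ) (ha : a = 1 + ε₃ + η)
    (A : Matrix (Fin 2) (Fin 2) ℝ)
    (hA : A = !![1 + ε₃ + θm / θ, -(a + θm / θ); θm / θ, -(η + θm / θ)]) :
    ∀ (t d m : ℝ),
      (NormedSpace.exp (t • A)).mulVec ![θ * d ^ 2 + m, m] 0 =
        (Real.exp (-η * t) / a) *
          ((Real.exp (a * t) * (θm + a * θ) - θm) * d ^ 2 + a * m) :=
  petc_triggering_bound_first_component_general η ε₃ θ θm hη hε₃ hθ a ha A hA
end

section
/- Let z : ℝ → ℝ² be differentiable on [t₀,t₁] with z'(t) = A·z(t) + B(t) for all t ∈ [t₀,t₁], where B : ℝ → ℝ² is continuous. If the first component of exp((t-s)A)·B(s) is ≤ 0 for all t₀ ≤ s ≤ t ≤ t₁, then for all t ∈ [t₀,t₁] the first component of z(t) is at most the first component of exp((t-t₀)A)·z(t₀). -/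
/-! By the variation-of-constants computation, `s ↦ exp ((t - s) • A) *ᵥ z s` has derivative
`exp ((t - s) • A) *ᵥ B s`, whose first component is nonpositive on `[t₀, t]`. Hence the first
component is antitone there, and comparing its values at `s = t` and `s = t₀` gives the bound. -/

open Matrix Set

theorem hasDerivAt_exp_sub_smul {𝔸 : Type*} [NormedRing 𝔸] [NormedAlgebra ℝ 𝔸] [CompleteSpace 𝔸]
    (x : 𝔸) (t s : ℝ) :
    HasDerivAt (fun s : ℝ => NormedSpace.exp ((t - s) • x))
      (-(NormedSpace.exp ((t - s) • x) * x)) s := by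
  have h := (hasDerivAt_exp_smul_const x (t - s)).scomp s ((hasDerivAt_id s).const_sub t)
  rwa [neg_one_smul] at h

section

-- Matrices carry no global norm; any choice gives the same topology, hence the same derivatives.
attribute [local instance] Matrix.linftyOpNormedAddCommGroup Matrix.linftyOpNormedSpace
  Matrix.linftyOpNormedRing Matrix.linftyOpNormedAlgebra

theorem HasDerivAt.mulVec {m n : Type*} [Fintype m] [Fintype n]
    {M : ℝ → Matrix m n ℝ} {v : ℝ → n → ℝ} {M' : Matrix m n ℝ} {v' : n → ℝ} {s : ℝ}
    (hM : HasDerivAt M M' s) (hv : HasDerivAt v v' s) :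
    HasDerivAt (fun s => M s *ᵥ v s) (M s *ᵥ v' + M' *ᵥ v s) s :=
  let mulVecCLM : Matrix m n ℝ →L[ℝ] (n → ℝ) →L[ℝ] (m → ℝ) :=
    LinearMap.toContinuousLinearMap
      (LinearMap.toContinuousLinearMap.toLinearMap ∘ₗ Matrix.mulVecBilin ℝ ℝ)
  mulVecCLM.hasDerivAt_of_bilinear (fun _ => hM) (fun _ => hv)

theorem hasDerivAt_exp_sub_smul_mulVec {n : Type*} [Fintype n] [DecidableEq n]
    {A : Matrix n n ℝ} {z : ℝ → n → ℝ} {b : n → ℝ} {t s : ℝ}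
    (hz : HasDerivAt z (A *ᵥ z s + b) s) :
    HasDerivAt (fun s => NormedSpace.exp ((t - s) • A) *ᵥ z s)
      (NormedSpace.exp ((t - s) • A) *ᵥ b) s := by
  refine ((hasDerivAt_exp_sub_smul A t s).mulVec hz).congr_deriv ?_
  rw [mulVec_add, neg_mulVec, ← mulVec_mulVec]
  abel

end

theorem variation_of_constants_first_component_bound_general
    (A : Matrix (Fin 2) (Fin 2) ℝ)
    (t₀ t₁ : ℝ)
    (z B : ℝ → (Fin 2 → ℝ))
    (hderiv : ∀ t ∈ Set.Icc t₀ t₁, HasDerivAt z (A.mulVec (z t) + B t) t)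
    (hBneg : ∀ s t : ℝ, t₀ ≤ s → s ≤ t → t ≤ t₁ →
        (NormedSpace.exp ((t - s) • A)).mulVec (B s) 0 ≤ 0) :
    ∀ t ∈ Set.Icc t₀ t₁,
      z t 0 ≤ (NormedSpace.exp ((t - t₀) • A)).mulVec (z t₀) 0 := by
  rintro t ⟨ht₀, ht₁⟩
  set f : ℝ → ℝ := fun s => (NormedSpace.exp ((t - s) • A) *ᵥ z s) 0
  have hf : ∀ s ∈ Icc t₀ t, HasDerivAt f ((NormedSpace.exp ((t - s) • A) *ᵥ B s) 0) s :=
    fun s hs => hasDerivAt_pi.1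
      (hasDerivAt_exp_sub_smul_mulVec (hderiv s ⟨hs.1, hs.2.trans ht₁⟩)) 0
  have hanti : AntitoneOn f (Icc t₀ t) := by
    refine antitoneOn_of_hasDerivWithinAt_nonpos (convex_Icc t₀ t)
      (fun s hs => (hf s hs).continuousAt.continuousWithinAt)
      (fun s hs => (hf s (interior_subset hs)).hasDerivWithinAt) fun s hs => ?_
    rw [interior_Icc] at hs
    exact hBneg s t hs.1.le hs.2.le ht₁
  simpa [f] using hanti (left_mem_Icc.2 ht₀) (right_mem_Icc.2 ht₀) ht₀

/-- if `z : ℝ → ℝ²` satisfies `z' = A z + B` on `[t₀,t₁]` with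
`B` continuous, and the first component of `exp ((t-s) • A) ⬝ B s` is `≤ 0` for
all `t₀ ≤ s ≤ t ≤ t₁`, then the first component of `z t` is at most the first
component of `exp ((t-t₀) • A) ⬝ z t₀` for all `t ∈ [t₀,t₁]`. -/
theorem variation_of_constants_first_component_bound
    (η ε₃ θ θm : ℝ) (hη : 0 < η) (hε₃ : 0 ≤ ε₃) (hθ : 0 < θ) (hθm : 0 < θm)
    (a : ℝ) (ha : a = 1 + ε₃ + η)
    (A : Matrix (Fin 2) (Fin 2) ℝ)
    (hA : A = !![1 + ε₃ + θm / θ, -(a + θm / θ); θm / θ, -(η + θm / θ)])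
    (t₀ t₁ : ℝ) (ht : t₀ < t₁)
    (z B : ℝ → (Fin 2 → ℝ))
    (hB : Continuous B)
    (hderiv : ∀ t ∈ Set.Icc t₀ t₁, HasDerivAt z (A.mulVec (z t) + B t) t)
    (hBneg : ∀ s t : ℝ, t₀ ≤ s → s ≤ t → t ≤ t₁ →
        (NormedSpace.exp ((t - s) • A)).mulVec (B s) 0 ≤ 0) :
    ∀ t ∈ Set.Icc t₀ t₁,
      z t 0 ≤ (NormedSpace.exp ((t - t₀) • A)).mulVec (z t₀) 0 :=
  variation_of_constants_first_component_bound_general A t₀ t₁ z B hderiv hBneg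
end
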